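/- For valid UL-parameters (u,l) and each k ∈ {0,...,T}, the vector p^(k) with p^(k)_t = (u_t − u_{t−1})/Δt for t ≤ k and p^(k)_t = (l_{T−t+1} − l_{T−t})/Δt for t > k (u_0 = l_0 = 0) belongs to F(u,l); i.e., its prefix sums satisfy Δt·∑_{j=1}^m p^(k)_j ≤ u_m and its suffix sums satisfy Δt·∑_{j=T−m+1}^T p^(k)_j ≥ l_m for all m ∈ {1,...,T}. -/

import Mathlib

open Finset

noncomputable section

/-- The UL-flexibility set: all signals `p` such that for every nonempty
subset `S` of time indices with `|S| = k`, `l k ≤ Δt * ∑_{t∈S} p t ≤ u k`. -/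
def ULset (T : ℕ) (Δt : ℝ) (u l : ℕ → ℝ) : Set (Fin T → ℝ) :=
  {p | ∀ S : Finset (Fin T), S.Nonempty →
    l S.card ≤ Δt * ∑ t ∈ S, p t ∧ Δt * ∑ t ∈ S, p t ≤ u S.card}

/-- Zero extension of a parameter vector: value 0 at index 0. -/
def ZExt (v : ℕ → ℝ) : ℕ → ℝ := fun k => if k = 0 then 0 else v k

/-- Valid UL parameters: the zero-extension of `u` is concave, nonnegative and
increasing; the zero-extension of `l` is convex, nonnegative and increasing; and
the zero-extension of `u` plus the reversed zero-extension of `l` is increasing. -/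
def ValidUL (T : ℕ) (u l : ℕ → ℝ) : Prop :=
  (∀ j, 1 ≤ j → j + 1 ≤ T → ZExt u (j - 1) + ZExt u (j + 1) ≤ 2 * ZExt u j) ∧
  (∀ k, k ≤ T → 0 ≤ ZExt u k) ∧
  (∀ j, j + 1 ≤ T → ZExt u j ≤ ZExt u (j + 1)) ∧
  (∀ j, 1 ≤ j → j + 1 ≤ T → 2 * ZExt l j ≤ ZExt l (j - 1) + ZExt l (j + 1)) ∧
  (∀ k, k ≤ T → 0 ≤ ZExt l k) ∧
  (∀ j, j + 1 ≤ T → ZExt l j ≤ ZExt l (j + 1)) ∧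
  (∀ j, 1 ≤ j → j ≤ T →
    ZExt l (T - j + 1) - ZExt l (T - j) ≤ ZExt u j - ZExt u (j - 1))

/-- Vertex candidate `p^(k)` (0-based time index `t` corresponds to paper index `t+1`). -/
def ULvertex (T : ℕ) (Δt : ℝ) (u l : ℕ → ℝ) (k : ℕ) : Fin T → ℝ :=
  fun t => if (t : ℕ) < k then (ZExt u ((t : ℕ) + 1) - ZExt u (t : ℕ)) / Δt
           else (ZExt l (T - (t : ℕ)) - ZExt l (T - (t : ℕ) - 1)) / Δt

/-!
`Δt · p^(k)` is the sequence of increments of `u` on the first `k` indices followed by the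
increments of the reversed `l`. Concavity of `u`, convexity of `l` and the cross condition
`l_{T-j+1} - l_{T-j} ≤ u_j - u_{j-1}` make it non-increasing, so by rearrangement its sum over
any `m`-element set lies between its suffix and its prefix sum of length `m`. The prefix sums
telescope to `u_{min(m,k)} + l_{T-min(m,k)} - l_{T-m}`, and by the cross condition
`j ↦ u_j + l_{T-j}` is non-decreasing, which gives both the prefix and the suffix bound.
-/

namespace Finset

theorem sum_le_sum_of_card_eq_of_sdiff_le {ι M : Type*} [DecidableEq ι] [AddCommMonoid M]
    [LinearOrder M] [IsOrderedCancelAddMonoid M] {s t : Finset ι} {f : ι → M}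
    (hst : #s = #t) (h : ∀ i ∈ s \ t, ∀ j ∈ t \ s, f i ≤ f j) :
    ∑ i ∈ s, f i ≤ ∑ i ∈ t, f i := by
  rw [← sum_sdiff_le_sum_sdiff]
  have hcard : #(s \ t) = #(t \ s) := card_sdiff_comm hst
  rcases (t \ s).eq_empty_or_nonempty with hempty | hne
  · rw [hempty, card_empty, card_eq_zero] at hcard
    rw [hempty, hcard]
  · calc ∑ i ∈ s \ t, f i ≤ #(s \ t) • (t \ s).inf' hne f :=
          sum_le_card_nsmul _ _ _ fun i hi => le_inf' hne f fun j hj => h i hi j hj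
      _ ≤ ∑ j ∈ t \ s, f j := hcard ▸ card_nsmul_le_sum _ _ _ fun j hj => inf'_le f hj

end Finset

namespace Fin

variable {T m : ℕ}

theorem map_valEmbedding_filter_val_lt (hm : m ≤ T) :
    (univ.filter fun j : Fin T => (j : ℕ) < m).map valEmbedding = range m := by
  ext i
  simp only [mem_map, mem_filter, mem_univ, true_and, valEmbedding_apply, mem_range]
  exact ⟨fun ⟨j, hj, hji⟩ => hji ▸ hj, fun hi => ⟨⟨i, by omega⟩, hi, rfl⟩⟩

theorem map_valEmbedding_filter_sub_le_val :
    (univ.filter fun j : Fin T => T - m ≤ (j : ℕ)).map valEmbedding = Ico (T - m) T := by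
  ext i
  simp only [mem_map, mem_filter, mem_univ, true_and, valEmbedding_apply, mem_Ico]
  exact ⟨fun ⟨j, hj, hji⟩ => hji ▸ ⟨hj, j.2⟩, fun hi => ⟨⟨i, hi.2⟩, hi.1, rfl⟩⟩

end Fin

namespace Antitone

variable {T : ℕ} {M : Type*} [AddCommMonoid M] [LinearOrder M] [IsOrderedCancelAddMonoid M]
  {f : Fin T → M}

theorem sum_le_sum_filter_val_lt_card (hf : Antitone f) (S : Finset (Fin T)) :
    ∑ t ∈ S, f t ≤ ∑ t ∈ univ.filter (fun j : Fin T => (j : ℕ) < #S), f t := by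
  have hS : #S ≤ T := by simpa using card_le_univ S
  refine sum_le_sum_of_card_eq_of_sdiff_le ?_ fun i hi j hj => hf ?_
  · rw [Fin.card_filter_val_lt, min_eq_right hS]
  · simp only [mem_sdiff, mem_filter, mem_univ, true_and] at hi hj
    exact Fin.le_def.2 (by omega)

theorem sum_filter_sub_card_le_val_le_sum (hf : Antitone f) (S : Finset (Fin T)) :
    ∑ t ∈ univ.filter (fun j : Fin T => T - #S ≤ (j : ℕ)), f t ≤ ∑ t ∈ S, f t := by
  have hS : #S ≤ T := by simpa using card_le_univ S
  refine sum_le_sum_of_card_eq_of_sdiff_le ?_ fun i hi j hj => hf ?_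
  · have hcard := congrArg card (Fin.map_valEmbedding_filter_sub_le_val (T := T) (m := #S))
    rw [card_map, Nat.card_Ico] at hcard
    omega
  · simp only [mem_sdiff, mem_filter, mem_univ, true_and] at hi hj
    exact Fin.le_def.2 (by omega)

end Antitone

theorem AntitoneOn.ite_lt {α β : Type*} [LinearOrder α] [Preorder β] {f g : α → β} {s : Set α}
    (hf : AntitoneOn f s) (hg : AntitoneOn g s) (hgf : ∀ i ∈ s, g i ≤ f i) (k : α) :
    AntitoneOn (fun i => if i < k then f i else g i) s := by
  intro a ha b hb hab
  by_cases hbk : b < k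
  · simp only [hbk, lt_of_le_of_lt hab hbk, if_true]
    exact hf ha hb hab
  · by_cases hak : a < k
    · simp only [hbk, hak, if_true, if_false]
      exact (hg ha hb hab).trans (hgf a ha)
    · simp only [hbk, hak, if_false]
      exact hg ha hb hab

@[simp]
theorem ZExt_zero (v : ℕ → ℝ) : ZExt v 0 = 0 := rfl

theorem ZExt_of_ne_zero (v : ℕ → ℝ) {k : ℕ} (hk : k ≠ 0) : ZExt v k = v k := if_neg hk

namespace ValidUL

variable {T : ℕ} {u l : ℕ → ℝ}

theorem antitoneOn_u_increment (h : ValidUL T u l) :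
    AntitoneOn (fun i => ZExt u (i + 1) - ZExt u i) (Set.Iio T) := by
  refine antitoneOn_of_add_one_le Set.ordConnected_Iio fun a _ _ ha => ?_
  have hconc := h.1 (a + 1) le_add_self (Set.mem_Iio.1 ha)
  simp only [Nat.add_sub_cancel] at hconc
  linarith

theorem antitoneOn_l_increment_rev (h : ValidUL T u l) :
    AntitoneOn (fun i => ZExt l (T - i) - ZExt l (T - i - 1)) (Set.Iio T) := by
  refine antitoneOn_of_add_one_le Set.ordConnected_Iio fun a _ _ ha => ?_
  simp only [Set.mem_Iio] at ha
  have hconv := h.2.2.2.1 (T - a - 1) (by omega) (by omega)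
  rw [show T - a - 1 + 1 = T - a by omega] at hconv
  rw [show T - (a + 1) = T - a - 1 by omega]
  linarith

theorem l_increment_rev_le_u_increment (h : ValidUL T u l) {i : ℕ} (hi : i < T) :
    ZExt l (T - i) - ZExt l (T - i - 1) ≤ ZExt u (i + 1) - ZExt u i := by
  have hcross := h.2.2.2.2.2.2 (i + 1) (by omega) hi
  rwa [show T - (i + 1) + 1 = T - i by omega, Nat.add_sub_cancel, ← Nat.sub_sub] at hcross

theorem monotoneOn_u_add_l_rev (h : ValidUL T u l) :
    MonotoneOn (fun j => ZExt u j + ZExt l (T - j)) (Set.Iic T) := by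
  refine monotoneOn_of_le_add_one Set.ordConnected_Iic fun a _ _ ha => ?_
  have hcross := h.l_increment_rev_le_u_increment (Set.mem_Iic.1 ha)
  rw [← Nat.sub_sub]
  linarith

end ValidUL

/-- `Δt · p^(k)` at the 0-based index `i`, extended to all of `ℕ`. -/
def ULincrement (T : ℕ) (u l : ℕ → ℝ) (k i : ℕ) : ℝ :=
  if i < k then ZExt u (i + 1) - ZExt u i else ZExt l (T - i) - ZExt l (T - i - 1)

section ULincrement

variable {T : ℕ} {Δt : ℝ} {u l : ℕ → ℝ} {k : ℕ}

theorem ULvertex_eq_div (t : Fin T) : ULvertex T Δt u l k t = ULincrement T u l k t / Δt :=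
  (ite_div ..).symm

theorem mul_sum_ULvertex (hΔt : Δt ≠ 0) (s : Finset (Fin T)) :
    Δt * ∑ t ∈ s, ULvertex T Δt u l k t = ∑ t ∈ s, ULincrement T u l k t := by
  simp only [mul_sum, ULvertex_eq_div, mul_div_cancel₀ _ hΔt]

theorem sum_range_ULincrement (m : ℕ) :
    ∑ i ∈ range m, ULincrement T u l k i
      = ZExt u (min m k) + ZExt l (T - min m k) - ZExt l (T - m) := by
  induction m with
  | zero => simp
  | succ m ih =>
    rw [sum_range_succ, ih, ULincrement]
    by_cases hmk : m < k
    · rw [if_pos hmk, min_eq_left hmk.le, min_eq_left (by omega : m + 1 ≤ k), ← Nat.sub_sub]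
      ring
    · rw [if_neg hmk, min_eq_right (by omega : k ≤ m), min_eq_right (by omega : k ≤ m + 1),
        ← Nat.sub_sub]
      ring

theorem ValidUL.antitone_ULvertex (h : ValidUL T u l) (hΔt : 0 < Δt) (k : ℕ) :
    Antitone (ULvertex T Δt u l k) := fun s t hst => by
  have hincr : AntitoneOn (ULincrement T u l k) (Set.Iio T) :=
    h.antitoneOn_u_increment.ite_lt h.antitoneOn_l_increment_rev
      (fun _ hi => h.l_increment_rev_le_u_increment hi) k
  rw [ULvertex_eq_div, ULvertex_eq_div]
  exact div_le_div_of_nonneg_right (hincr s.2 t.2 hst) hΔt.le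

theorem ValidUL.mul_sum_filter_val_lt_ULvertex_le (h : ValidUL T u l) (hΔt : Δt ≠ 0) {m : ℕ}
    (hm0 : m ≠ 0) (hmT : m ≤ T) :
    Δt * ∑ j ∈ univ.filter (fun j : Fin T => (j : ℕ) < m), ULvertex T Δt u l k j ≤ u m := by
  rw [mul_sum_ULvertex hΔt, ← ZExt_of_ne_zero u hm0]
  calc ∑ j ∈ univ.filter (fun j : Fin T => (j : ℕ) < m), ULincrement T u l k j
      = ∑ i ∈ range m, ULincrement T u l k i := by
        rw [← Fin.map_valEmbedding_filter_val_lt hmT, sum_map]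
        rfl
    _ = ZExt u (min m k) + ZExt l (T - min m k) - ZExt l (T - m) := sum_range_ULincrement m
    _ ≤ ZExt u m := by
        have := h.monotoneOn_u_add_l_rev (le_trans (min_le_left m k) hmT) hmT (min_le_left m k)
        dsimp only at this
        linarith

theorem ValidUL.le_mul_sum_filter_sub_le_val_ULvertex (h : ValidUL T u l) (hΔt : Δt ≠ 0)
    (hk : k ≤ T) {m : ℕ} (hm0 : m ≠ 0) (hmT : m ≤ T) :
    l m ≤ Δt * ∑ j ∈ univ.filter (fun j : Fin T => T - m ≤ (j : ℕ)), ULvertex T Δt u l k j := by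
  rw [mul_sum_ULvertex hΔt, ← ZExt_of_ne_zero l hm0]
  calc ZExt l m
      ≤ (ZExt u k + ZExt l (T - k) - ZExt l 0)
        - (ZExt u (min (T - m) k) + ZExt l (T - min (T - m) k) - ZExt l (T - (T - m))) := by
        have := h.monotoneOn_u_add_l_rev ((min_le_right (T - m) k).trans hk) hk
          (min_le_right (T - m) k)
        rw [Nat.sub_sub_self hmT, ZExt_zero]
        dsimp only at this
        linarith
    _ = ∑ i ∈ Ico (T - m) T, ULincrement T u l k i := by
        rw [sum_Ico_eq_sub _ (Nat.sub_le T m), sum_range_ULincrement, sum_range_ULincrement,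
          min_eq_right hk, Nat.sub_self]
    _ = ∑ j ∈ univ.filter (fun j : Fin T => T - m ≤ (j : ℕ)), ULincrement T u l k j := by
        rw [← Fin.map_valEmbedding_filter_sub_le_val, sum_map]
        rfl

end ULincrement

theorem ULvertex_mem_general (T : ℕ) (Δt : ℝ) (hΔt : 0 < Δt)
    (u l : ℕ → ℝ) (hvalid : ValidUL T u l) (k : ℕ) (hk : k ≤ T) :
    ULvertex T Δt u l k ∈ ULset T Δt u l ∧
    (∀ m, 1 ≤ m → m ≤ T →
      Δt * ∑ j ∈ Finset.univ.filter (fun j : Fin T => (j : ℕ) < m),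
        ULvertex T Δt u l k j ≤ u m ∧
      l m ≤ Δt * ∑ j ∈ Finset.univ.filter (fun j : Fin T => T - m ≤ (j : ℕ)),
        ULvertex T Δt u l k j) := by
  have hprefix (m : ℕ) (hm : 1 ≤ m) (hmT : m ≤ T) :=
    hvalid.mul_sum_filter_val_lt_ULvertex_le (k := k) hΔt.ne' (by omega) hmT
  have hsuffix (m : ℕ) (hm : 1 ≤ m) (hmT : m ≤ T) :=
    hvalid.le_mul_sum_filter_sub_le_val_ULvertex hΔt.ne' hk (by omega) hmT
  have hanti := hvalid.antitone_ULvertex hΔt k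
  refine ⟨fun S hS => ?_, fun m hm hmT => ⟨hprefix m hm hmT, hsuffix m hm hmT⟩⟩
  have hS1 : 1 ≤ #S := card_pos.2 hS
  have hST : #S ≤ T := by simpa using card_le_univ S
  constructor
  · calc l #S ≤ _ := hsuffix _ hS1 hST
      _ ≤ Δt * ∑ t ∈ S, ULvertex T Δt u l k t :=
        mul_le_mul_of_nonneg_left (hanti.sum_filter_sub_card_le_val_le_sum S) hΔt.le
  · calc Δt * ∑ t ∈ S, ULvertex T Δt u l k t ≤ _ :=
          mul_le_mul_of_nonneg_left (hanti.sum_le_sum_filter_val_lt_card S) hΔt.le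
      _ ≤ u #S := hprefix _ hS1 hST

/-- For valid UL-parameters, each vertex candidate `p^(k)` belongs
to `F(u,l)`; its prefix sums are bounded by `u` and its suffix sums bounded
below by `l`. -/
theorem ULvertex_mem (T : ℕ) (hT : 1 ≤ T) (Δt : ℝ) (hΔt : 0 < Δt)
    (u l : ℕ → ℝ) (hvalid : ValidUL T u l) (k : ℕ) (hk : k ≤ T) :
    ULvertex T Δt u l k ∈ ULset T Δt u l ∧
    (∀ m, 1 ≤ m → m ≤ T →
      Δt * ∑ j ∈ Finset.univ.filter (fun j : Fin T => (j : ℕ) < m),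
        ULvertex T Δt u l k j ≤ u m ∧
      l m ≤ Δt * ∑ j ∈ Finset.univ.filter (fun j : Fin T => T - m ≤ (j : ℕ)),
        ULvertex T Δt u l k j) :=
  ULvertex_mem_general T Δt hΔt u l hvalid k hk
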